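/- arXiv:1707.04561 — 3 statements merged into one kernel-verified Lean document; each statement's English description precedes it below -/
import Mathlib

section
/- Let L be a positive integer and let G_1,…,G_L, H_1,…,H_L be 2L mutually independent random variables, where each G_i is exponentially distributed with mean λ_pp > 0 and each H_i is exponentially distributed with mean λ_sp > 0. Fix P_p > 0, N_0 > 0, ζ > 0 and Θ_p ∈ (0,1). Set A = exp(−ζ·N_0/(P_p·λ_pp)) and assume A > (1−Θ_p)^(1/L). Then with P_ST = (P_p·λ_pp/(ζ·λ_sp)) · ( A/(1−Θ_p)^(1/L) − 1 ) (which is positive), the worst-case primary outage probability satisfies 1 − ∏_{i=1}^{L} ( 1 − P( P_p·G_i / (P_ST·H_i + N_0) ≤ ζ ) ) = Θ_p. -/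
/-!
A link is out of outage iff `G > c + k H` with `c = ζ N0 / Pp`, `k = ζ P / Pp`. Conditioning on
the independent `H ≥ 0` and using the exponential tail of `G`, this has probability
`E[exp (-(c + k H) / lpp)]`, a value of the Laplace transform of `H`:
`A · Pp lpp / (Pp lpp + ζ P lsp)`. The choice `P = PST` makes the denominator
`Pp lpp · A / (1 - Θp)^(1/L)`, so each of the `L` identical factors is `(1 - Θp)^(1/L)`.
-/

open MeasureTheory ProbabilityTheory Real Set

namespace ProbabilityTheory

lemma expMeasure_eq_withDensity (r : ℝ) :
    expMeasure r = volume.withDensity (exponentialPDF r) := rfl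

lemma expMeasure_Iio_zero (r : ℝ) : expMeasure r (Iio 0) = 0 := by
  rw [expMeasure_eq_withDensity, withDensity_apply _ measurableSet_Iio]
  exact lintegral_exponentialPDF_of_nonpos le_rfl

lemma ae_nonneg_expMeasure (r : ℝ) : ∀ᵐ x ∂expMeasure r, 0 ≤ x := by
  rw [ae_iff]
  simp only [not_le]
  exact expMeasure_Iio_zero r

lemma expMeasure_Ioi {r t : ℝ} (hr : 0 < r) (ht : 0 ≤ t) :
    expMeasure r (Ioi t) = ENNReal.ofReal (exp (-(r * t))) := by
  have := isProbabilityMeasure_expMeasure hr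
  have hle : exp (-(r * t)) ≤ 1 := exp_le_one_iff.2 (by nlinarith)
  rw [← compl_Iic, prob_compl_eq_one_sub measurableSet_Iic, ← ofReal_cdf,
    cdf_expMeasure_eq hr, if_pos ht, ← ENNReal.ofReal_one,
    ← ENNReal.ofReal_sub _ (sub_nonneg.2 hle)]
  ring_nf

lemma lintegral_exp_neg_mul_expMeasure {r s : ℝ} (hr : 0 < r) (hrs : 0 < r + s) :
    ∫⁻ x, ENNReal.ofReal (exp (-(s * x))) ∂expMeasure r = ENNReal.ofReal (r / (r + s)) := by
  have hdensity : (fun x ↦ exponentialPDF r x * ENNReal.ofReal (exp (-(s * x))))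
      = (Ici 0).indicator fun x ↦ ENNReal.ofReal (r * exp (-(r + s) * x)) := by
    ext x
    rcases lt_or_ge x 0 with hx | hx
    · simp [exponentialPDF_of_neg hx, hx]
    · rw [indicator_of_mem (mem_Ici.2 hx), exponentialPDF_of_nonneg hx,
        ← ENNReal.ofReal_mul (by positivity), mul_assoc, ← exp_add]
      ring_nf
  have hint : IntegrableOn (fun x ↦ r * exp (-(r + s) * x)) (Ici 0) := by
    rw [integrableOn_Ici_iff_integrableOn_Ioi]
    exact (integrableOn_exp_mul_Ioi (by linarith) 0).const_mul r
  have hpdf : Measurable (exponentialPDF r) := (measurable_exponentialPDFReal r).ennreal_ofReal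
  rw [expMeasure_eq_withDensity, lintegral_withDensity_eq_lintegral_mul _ hpdf (by fun_prop),
    Pi.mul_def, hdensity, lintegral_indicator measurableSet_Ici,
    ← ofReal_integral_eq_lintegral_ofReal hint (ae_of_all _ fun x ↦ by positivity),
    integral_Ici_eq_integral_Ioi, integral_const_mul, integral_exp_mul_Ioi (by linarith)]
  congr 1
  field_simp
  simp

lemma prod_expMeasure_setOf_add_mul_lt {a b c k : ℝ} (ha : 0 < a) (hb : 0 < b) (hc : 0 ≤ c)
    (hk : 0 ≤ k) :
    (expMeasure b).prod (expMeasure a) {p : ℝ × ℝ | c + k * p.1 < p.2}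
      = ENNReal.ofReal (exp (-(a * c)) * (b / (b + a * k))) := by
  have hS : MeasurableSet {p : ℝ × ℝ | c + k * p.1 < p.2} :=
    measurableSet_lt (by fun_prop) measurable_snd
  have := isProbabilityMeasure_expMeasure ha
  have hslice : ∀ᵐ x ∂expMeasure b,
      expMeasure a (Prod.mk x ⁻¹' {p | c + k * p.1 < p.2}) =
        ENNReal.ofReal (exp (-(a * c))) * ENNReal.ofReal (exp (-(a * k * x))) := by
    filter_upwards [ae_nonneg_expMeasure b] with x hx
    rw [show Prod.mk x ⁻¹' {p : ℝ × ℝ | c + k * p.1 < p.2} = Ioi (c + k * x) from rfl,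
      expMeasure_Ioi ha (by positivity), ← ENNReal.ofReal_mul (exp_pos _).le, ← exp_add]
    ring_nf
  rw [Measure.prod_apply hS, lintegral_congr_ae hslice, lintegral_const_mul _ (by fun_prop),
    lintegral_exp_neg_mul_expMeasure hb (by positivity), ← ENNReal.ofReal_mul (exp_pos _).le]

variable {Ω : Type*} [MeasurableSpace Ω] {μ : Measure Ω}

lemma measure_add_mul_lt_of_indepFun [IsFiniteMeasure μ] {X Y : Ω → ℝ} {a b c k : ℝ}
    (ha : 0 < a) (hb : 0 < b) (hc : 0 ≤ c) (hk : 0 ≤ k) (hX : Measurable X) (hY : Measurable Y)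
    (hXY : IndepFun X Y μ) (hXd : μ.map X = expMeasure b) (hYd : μ.map Y = expMeasure a) :
    μ {ω | c + k * X ω < Y ω} = ENNReal.ofReal (exp (-(a * c)) * (b / (b + a * k))) := by
  have hmap : μ.map (fun ω ↦ (X ω, Y ω)) = (expMeasure b).prod (expMeasure a) := by
    rw [← hXd, ← hYd]
    exact (indepFun_iff_map_prod_eq_prod_map_map hX.aemeasurable hY.aemeasurable).1 hXY
  change μ ((fun ω ↦ (X ω, Y ω)) ⁻¹' {p : ℝ × ℝ | c + k * p.1 < p.2}) = _
  rw [← Measure.map_apply (hX.prodMk hY) (measurableSet_lt (by fun_prop) measurable_snd), hmap,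
    prod_expMeasure_setOf_add_mul_lt ha hb hc hk]

lemma toReal_measure_sinr_le [IsProbabilityMeasure μ] {G H : Ω → ℝ} {lpp lsp Pp P N0 ζ : ℝ}
    (hlpp : 0 < lpp) (hlsp : 0 < lsp) (hPp : 0 < Pp) (hP : 0 ≤ P) (hN0 : 0 < N0) (hζ : 0 ≤ ζ)
    (hGm : Measurable G) (hHm : Measurable H) (hind : IndepFun H G μ)
    (hG : μ.map G = expMeasure lpp⁻¹) (hH : μ.map H = expMeasure lsp⁻¹) :
    (μ {ω | Pp * G ω / (P * H ω + N0) ≤ ζ}).toReal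
      = 1 - exp (-(ζ * N0 / (Pp * lpp))) * (Pp * lpp / (Pp * lpp + ζ * P * lsp)) := by
  set c := ζ * N0 / Pp
  set k := ζ * P / Pp
  have hH_nonneg : ∀ᵐ ω ∂μ, 0 ≤ H ω :=
    ae_of_ae_map hHm.aemeasurable (hH ▸ ae_nonneg_expMeasure _)
  have hevent : ({ω | Pp * G ω / (P * H ω + N0) ≤ ζ} : Set Ω)
      =ᵐ[μ] ({ω | c + k * H ω < G ω}ᶜ : Set Ω) := by
    filter_upwards [hH_nonneg] with ω hω
    change (Pp * G ω / (P * H ω + N0) ≤ ζ) = ¬(c + k * H ω < G ω)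
    have hcH : c + k * H ω = ζ * (P * H ω + N0) / Pp := by simp only [c, k]; ring
    rw [not_lt, hcH, le_div_iff₀ hPp, div_le_iff₀ (by positivity), mul_comm (G ω)]
  have hmeas : MeasurableSet {ω | c + k * H ω < G ω} := measurableSet_lt (by fun_prop) hGm
  rw [measure_congr hevent, prob_compl_eq_one_sub hmeas,
    ENNReal.toReal_sub_of_le prob_le_one ENNReal.one_ne_top, ENNReal.toReal_one,
    measure_add_mul_lt_of_indepFun (by positivity) (by positivity) (by positivity)
      (by positivity) hHm hGm hind hH hG, ENNReal.toReal_ofReal (by positivity)]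
  simp only [c, k]
  congr 2
  · congr 1
    field_simp
  · field_simp

end ProbabilityTheory

theorem max_secondary_power_meets_outage_threshold
    {Ω : Type*} [MeasureSpace Ω] [IsProbabilityMeasure (ℙ : Measure Ω)]
    (L : ℕ) (hL : 0 < L)
    (G H : Fin L → Ω → ℝ)
    (hGm : ∀ i, Measurable (G i)) (hHm : ∀ i, Measurable (H i))
    (lpp lsp : ℝ) (hlpp : 0 < lpp) (hlsp : 0 < lsp)
    (hG : ∀ i, Measure.map (G i) ℙ = expMeasure lpp⁻¹)
    (hH : ∀ i, Measure.map (H i) ℙ = expMeasure lsp⁻¹)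
    (hind : iIndepFun (Sum.elim G H) ℙ)
    (Pp N0 ζ Θp : ℝ) (hPp : 0 < Pp) (hN0 : 0 < N0) (hζ : 0 < ζ)
    (hΘp : Θp ∈ Set.Ioo (0 : ℝ) 1)
    (A : ℝ) (hA : A = Real.exp (-(ζ * N0 / (Pp * lpp))))
    (hAgt : (1 - Θp) ^ ((L : ℝ)⁻¹) < A)
    (PST : ℝ)
    (hPST : PST = Pp * lpp / (ζ * lsp) * (A / (1 - Θp) ^ ((L : ℝ)⁻¹) - 1)) :
    0 < PST ∧
      1 - ∏ i : Fin L,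
        (1 - (ℙ {ω | Pp * G i ω / (PST * H i ω + N0) ≤ ζ}).toReal) = Θp := by
  set B := (1 - Θp) ^ ((L : ℝ)⁻¹)
  have hB : 0 < B := rpow_pos_of_pos (by linarith [hΘp.2]) _
  have hA_ne : A ≠ 0 := hA ▸ (exp_pos _).ne'
  have hPST_pos : 0 < PST := by
    rw [hPST]
    exact mul_pos (by positivity) (sub_pos.2 ((one_lt_div hB).2 hAgt))
  refine ⟨hPST_pos, ?_⟩
  have hlink : ∀ i, 1 - (ℙ {ω | Pp * G i ω / (PST * H i ω + N0) ≤ ζ}).toReal = B := by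
    intro i
    have hind_i : IndepFun (H i) (G i) ℙ := hind.indepFun (i := .inr i) (j := .inl i) (by simp)
    rw [toReal_measure_sinr_le hlpp hlsp hPp hPST_pos.le hN0 hζ.le (hGm i) (hHm i) hind_i (hG i)
      (hH i), ← hA, hPST]
    have hden : Pp * lpp + ζ * (Pp * lpp / (ζ * lsp) * (A / B - 1)) * lsp = Pp * lpp * A / B := by
      field_simp
      ring
    rw [hden]
    field_simp
    ring
  rw [Finset.prod_congr rfl fun i _ ↦ hlink i, Finset.prod_const, Finset.card_univ,
    Fintype.card_fin, rpow_inv_natCast_pow (by linarith [hΘp.2]) hL.ne']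
  ring
end

section
/- Let L be a positive integer, let X be an exponential random variable with mean μ₁ > 0 and Y an independent gamma random variable with shape L and scale μ₂ > 0, with μ₁ > μ₂, and set ω = 1/μ₂ − 1/μ₁ > 0. Then for any P_th > 0, P(X + Y < P_th) = γ(L, P_th/μ₂)/Γ(L) − exp(−P_th/μ₁)·γ(L, ω·P_th)/( Γ(L)·(ω·μ₂)^L ). -/
open MeasureTheory ProbabilityTheory

/-- Lower incomplete gamma function `γ(a, b) = ∫₀ᵇ t^(a-1) e^(-t) dt`. -/
noncomputable def lowerIncGamma (a b : ℝ) : ℝ :=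
  ∫ t in (0 : ℝ)..b, t ^ (a - 1) * Real.exp (-t)

/-!
Conditioning on `Y`, `P(X + Y < c) = ∫₀ᶜ f_Y(y) (1 - e^{-(c - y)/μ₁}) dy`. Multiplying the gamma
density of rate `1/μ₂` by `e^{y/μ₁}` only changes its rate to `ω = 1/μ₂ - 1/μ₁`, so after rescaling
both terms of the integrand integrate to lower incomplete gamma functions.
-/

open Real Set

lemma lintegral_ofReal_eq_ofReal_setIntegral {α : Type*} [MeasurableSpace α] {μ : Measure α}
    {f : α → ℝ} {s : Set α} (hs : MeasurableSet s) (hf : IntegrableOn f s μ)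
    (hf_nonneg : ∀ x ∈ s, 0 ≤ f x) (hf_nonpos : ∀ x ∉ s, f x ≤ 0) :
    ∫⁻ x, ENNReal.ofReal (f x) ∂μ = ENNReal.ofReal (∫ x in s, f x ∂μ) := by
  rw [ofReal_integral_eq_lintegral_ofReal hf (ae_restrict_of_forall_mem hs hf_nonneg),
    setLIntegral_eq_of_support_subset]
  intro x hx
  by_contra hxs
  exact hx (ENNReal.ofReal_eq_zero.mpr (hf_nonpos x hxs))

lemma lowerIncGamma_natCast_add_one (n : ℕ) (b : ℝ) :
    lowerIncGamma (n + 1 : ℕ) b = ∫ t in (0 : ℝ)..b, t ^ n * exp (-t) := by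
  simp [lowerIncGamma, ← rpow_natCast]

lemma integral_pow_mul_exp_neg_mul (n : ℕ) {β : ℝ} (hβ : β ≠ 0) (c : ℝ) :
    ∫ y in (0 : ℝ)..c, y ^ n * exp (-(β * y)) = lowerIncGamma (n + 1 : ℕ) (β * c) / β ^ (n + 1) := by
  have h := intervalIntegral.smul_integral_comp_mul_left (fun t => t ^ n * exp (-t)) β
    (a := 0) (b := c)
  rw [mul_zero] at h
  rw [lowerIncGamma_natCast_add_one, eq_div_iff (pow_ne_zero _ hβ), ← h, smul_eq_mul,
    ← intervalIntegral.integral_mul_const, ← intervalIntegral.integral_const_mul]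
  congr 1 with y
  ring

namespace ProbabilityTheory

lemma IndepFun.measure_add_lt {Ω : Type*} [MeasurableSpace Ω] {P : Measure Ω} [IsFiniteMeasure P]
    {X Y : Ω → ℝ} (hX : Measurable X) (hY : Measurable Y) (hXY : IndepFun X Y P) (c : ℝ) :
    P {ω | X ω + Y ω < c} = ∫⁻ y, P.map X (Iio (c - y)) ∂P.map Y := by
  have hs : MeasurableSet {p : ℝ × ℝ | p.1 + p.2 < c} := by measurability
  calc P {ω | X ω + Y ω < c} = (P.map X).prod (P.map Y) {p | p.1 + p.2 < c} := by
        rw [← (indepFun_iff_map_prod_eq_prod_map_map hX.aemeasurable hY.aemeasurable).mp hXY,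
          Measure.map_apply (hX.prodMk hY) hs]
        rfl
    _ = ∫⁻ y, P.map X (Iio (c - y)) ∂P.map Y := by
        rw [Measure.prod_apply_symm hs]
        congr! with y
        ext x
        simp [lt_sub_iff_add_lt]

lemma expMeasure_Iio {r : ℝ} (hr : 0 < r) (c : ℝ) :
    expMeasure r (Iio c) = ENNReal.ofReal (1 - exp (-(r * c))) := by
  have := isProbabilityMeasure_expMeasure hr
  have hac : expMeasure r ≪ volume := withDensity_absolutelyContinuous _ _
  rw [measure_congr (hac.ae_eq Iio_ae_eq_Iic), ← ofReal_cdf, cdf_expMeasure_eq hr]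
  split_ifs with hc
  · rfl
  · rw [ENNReal.ofReal_zero, eq_comm, ENNReal.ofReal_eq_zero, sub_nonpos, one_le_exp_iff]
    nlinarith

lemma integrable_gammaPDFReal {a r : ℝ} (ha : 0 < a) (hr : 0 < r) :
    Integrable (gammaPDFReal a r) := by
  have h := integrable_toReal_of_lintegral_ne_top (μ := volume)
    (measurable_gammaPDFReal a r).ennreal_ofReal.aemeasurable
    (by simp only [← gammaPDF.eq_1, lintegral_gammaPDF_eq_one ha hr]; exact ENNReal.one_ne_top)
  simpa [ENNReal.toReal_ofReal (gammaPDFReal_nonneg ha hr _)] using h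

lemma lintegral_gammaMeasure_ofReal {a r : ℝ} (ha : 0 < a) (hr : 0 < r) {g : ℝ → ℝ}
    (hg : Measurable g) :
    ∫⁻ y, ENNReal.ofReal (g y) ∂gammaMeasure a r =
      ∫⁻ y, ENNReal.ofReal (gammaPDFReal a r y * g y) := by
  have hpdf : Measurable (gammaPDF a r) := (measurable_gammaPDFReal a r).ennreal_ofReal
  rw [gammaMeasure, lintegral_withDensity_eq_lintegral_mul _ hpdf hg.ennreal_ofReal]
  simp only [Pi.mul_apply, gammaPDF, ENNReal.ofReal_mul (gammaPDFReal_nonneg ha hr _)]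

lemma lintegral_ofReal_one_sub_exp_gammaMeasure {a r s c : ℝ} (ha : 0 < a) (hr : 0 < r)
    (hs : 0 ≤ s) (hc : 0 ≤ c) :
    ∫⁻ y, ENNReal.ofReal (1 - exp (-(s * (c - y)))) ∂gammaMeasure a r =
      ENNReal.ofReal (∫ y in 0..c, gammaPDFReal a r y * (1 - exp (-(s * (c - y))))) := by
  -- beyond `c` the integrand `1 - exp …` is negative, and `ENNReal.ofReal` truncates it to `0`
  rw [lintegral_gammaMeasure_ofReal ha hr (by fun_prop),
    lintegral_ofReal_eq_ofReal_setIntegral measurableSet_Icc, integral_Icc_eq_integral_Ioc,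
    intervalIntegral.integral_of_le hc]
  · exact (integrable_gammaPDFReal ha hr).integrableOn.mul_continuousOn (by fun_prop) isCompact_Icc
  · rintro y ⟨-, hyc⟩
    have : exp (-(s * (c - y))) ≤ 1 := exp_le_one_iff.mpr (by nlinarith)
    exact mul_nonneg (gammaPDFReal_nonneg ha hr y) (by linarith)
  · intro y hy
    rcases lt_or_ge y 0 with hy0 | hy0
    · simp [gammaPDFReal, not_le.mpr hy0]
    · have hcy : c < y := by
        by_contra! h
        exact hy ⟨hy0, h⟩
      have : 1 ≤ exp (-(s * (c - y))) := one_le_exp_iff.mpr (by nlinarith)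
      exact mul_nonpos_of_nonneg_of_nonpos (gammaPDFReal_nonneg ha hr y) (by linarith)

lemma gammaPDFReal_natCast_add_one (n : ℕ) (r : ℝ) {x : ℝ} (hx : 0 ≤ x) :
    gammaPDFReal (n + 1 : ℕ) r x = r ^ (n + 1) / Gamma (n + 1 : ℕ) * (x ^ n * exp (-(r * x))) := by
  simp only [gammaPDFReal, if_pos hx, Nat.cast_add_one, add_sub_cancel_right]
  rw [← Nat.cast_add_one, rpow_natCast, rpow_natCast, mul_assoc]

lemma integral_gammaPDFReal_mul_one_sub_exp (n : ℕ) {r s c : ℝ} (hr : r ≠ 0) (hrs : r ≠ s)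
    (hc : 0 ≤ c) :
    ∫ y in 0..c, gammaPDFReal (n + 1 : ℕ) r y * (1 - exp (-(s * (c - y)))) =
      lowerIncGamma (n + 1 : ℕ) (r * c) / Gamma (n + 1 : ℕ) -
        exp (-(s * c)) * lowerIncGamma (n + 1 : ℕ) ((r - s) * c) /
          (Gamma (n + 1 : ℕ) * ((r - s) / r) ^ (n + 1)) := by
  set C := r ^ (n + 1) / Gamma (n + 1 : ℕ) with hC
  have hsplit : ∀ y ∈ uIcc 0 c, gammaPDFReal (n + 1 : ℕ) r y * (1 - exp (-(s * (c - y)))) =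
      C * (y ^ n * exp (-(r * y))) - C * exp (-(s * c)) * (y ^ n * exp (-((r - s) * y))) := by
    intro y hy
    rw [gammaPDFReal_natCast_add_one n r (uIcc_of_le hc ▸ hy).1]
    have : exp (-(r * y)) * exp (-(s * (c - y))) = exp (-(s * c)) * exp (-((r - s) * y)) := by
      rw [← exp_add, ← exp_add]; ring_nf
    linear_combination (-C * y ^ n) * this
  have hΓ : Gamma (n + 1 : ℕ) ≠ 0 := (Gamma_pos_of_pos (by positivity)).ne'
  have hrs' : r - s ≠ 0 := sub_ne_zero.mpr hrs
  rw [intervalIntegral.integral_congr hsplit, intervalIntegral.integral_sub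
      ((by fun_prop : Continuous _).intervalIntegrable _ _)
      ((by fun_prop : Continuous _).intervalIntegrable _ _),
    intervalIntegral.integral_const_mul, intervalIntegral.integral_const_mul,
    integral_pow_mul_exp_neg_mul n hr, integral_pow_mul_exp_neg_mul n hrs', hC, div_pow]
  field_simp

end ProbabilityTheory

theorem power_outage_prob_distinct_scales
    {Ω : Type*} [MeasureSpace Ω] [IsProbabilityMeasure (ℙ : Measure Ω)]
    (L : ℕ) (hL : 0 < L)
    (X Y : Ω → ℝ) (hXm : Measurable X) (hYm : Measurable Y)
    (μ₁ μ₂ : ℝ) (hμ₂ : 0 < μ₂) (hμ : μ₂ < μ₁)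
    (hX : Measure.map X ℙ = expMeasure μ₁⁻¹)
    (hY : Measure.map Y ℙ = gammaMeasure L μ₂⁻¹)
    (hind : IndepFun X Y ℙ)
    (w : ℝ) (hw : w = 1 / μ₂ - 1 / μ₁)
    (Pth : ℝ) (hPth : 0 < Pth) :
    ℙ {ω | X ω + Y ω < Pth} =
      ENNReal.ofReal
        (lowerIncGamma L (Pth / μ₂) / Real.Gamma L -
          Real.exp (-(Pth / μ₁)) * lowerIncGamma L (w * Pth) /
            (Real.Gamma L * (w * μ₂) ^ L)) := by
  obtain ⟨n, rfl⟩ : ∃ n, L = n + 1 := Nat.exists_eq_add_one.mpr hL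
  have hμ₁ : 0 < μ₁ := hμ₂.trans hμ
  have hrates : μ₂⁻¹ ≠ μ₁⁻¹ := ((inv_lt_inv₀ hμ₁ hμ₂).mpr hμ).ne'
  have hw' : w = μ₂⁻¹ - μ₁⁻¹ := by rw [hw, one_div, one_div]
  rw [hind.measure_add_lt hXm hYm, hX, hY]
  simp_rw [expMeasure_Iio (inv_pos.mpr hμ₁)]
  rw [lintegral_ofReal_one_sub_exp_gammaMeasure (by positivity) (inv_pos.mpr hμ₂)
      (inv_pos.mpr hμ₁).le hPth.le,
    integral_gammaPDFReal_mul_one_sub_exp n (inv_ne_zero hμ₂.ne') hrates hPth.le, ← hw',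
    div_inv_eq_mul, inv_mul_eq_div, inv_mul_eq_div]
end

section
/- Let L be a positive integer. Let Y be an exponential random variable with mean λ_y > 0 and Z an independent gamma random variable with shape L and scale s > 0. Then for any constants a > 0, ζ > 0 and N_0 > 0, P( a·Y/(Z + N_0) ≥ ζ ) = exp(−ζ·N_0/(a·λ_y)) · s^(−L) · ( 1/s + ζ/(a·λ_y) )^(−L). -/
/-!
Condition on the interference `Z`: since `Z ≥ 0` a.s. and `Y` is independent of `Z`, the
conditional probability of `a Y ≥ ζ (Z + N₀)` is the exponential tail `exp(-c (Z + N₀))`, where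
`c = ζ / (a λ_y)`. So the probability is `exp(-c N₀) · E[exp(-c Z)]`, and this Laplace transform
of the gamma law follows from `exp(-c z)` times the gamma density of rate `r` being
`(r / (r + c))^L` times the gamma density of rate `r + c`.
-/

open MeasureTheory ProbabilityTheory Real Set

namespace ProbabilityTheory

lemma expMeasure_Ici {r t : ℝ} (hr : 0 < r) (ht : 0 ≤ t) :
    expMeasure r (Ici t) = ENNReal.ofReal (exp (-(r * t))) := by
  have := isProbabilityMeasure_expMeasure hr
  have : NullSingletonClass (expMeasure r) :=
    inferInstanceAs (NullSingletonClass (volume.withDensity (gammaPDF 1 r)))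
  have hcdf_nonneg : 0 ≤ 1 - exp (-(r * t)) := by
    simpa using exp_le_one_iff.2 (neg_nonpos.2 (mul_nonneg hr.le ht))
  rw [← measure_congr Ioi_ae_eq_Ici, ← compl_Iic, prob_compl_eq_one_sub measurableSet_Iic,
    ← ofReal_cdf, cdf_expMeasure_eq hr, if_pos ht, ← ENNReal.ofReal_one,
    ← ENNReal.ofReal_sub _ hcdf_nonneg, sub_sub_cancel]

lemma gammaPDFReal_mul_exp_neg_mul {a r c : ℝ} (hr : 0 < r) (hrc : 0 < r + c) (x : ℝ) :
    gammaPDFReal a r x * exp (-(c * x)) = (r / (r + c)) ^ a * gammaPDFReal a (r + c) x := by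
  unfold gammaPDFReal
  split_ifs
  · rw [div_rpow hr.le hrc.le]
    field_simp
    rw [mul_assoc, ← exp_add]
    ring_nf
  · simp

lemma measurable_gammaPDF (a r : ℝ) : Measurable (gammaPDF a r) :=
  (measurable_gammaPDFReal a r).ennreal_ofReal

lemma lintegral_exp_neg_mul_gammaMeasure {a r c : ℝ} (ha : 0 < a) (hr : 0 < r) (hrc : 0 < r + c) :
    ∫⁻ x, ENNReal.ofReal (exp (-(c * x))) ∂gammaMeasure a r =
      ENNReal.ofReal ((r / (r + c)) ^ a) := by
  rw [gammaMeasure,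
    lintegral_withDensity_eq_lintegral_mul _ (measurable_gammaPDF a r) (by fun_prop)]
  calc ∫⁻ x, (gammaPDF a r * fun x => ENNReal.ofReal (exp (-(c * x)))) x
      = ∫⁻ x, ENNReal.ofReal ((r / (r + c)) ^ a) * gammaPDF a (r + c) x := by
        refine lintegral_congr fun x => ?_
        simp only [Pi.mul_apply, gammaPDF]
        rw [← ENNReal.ofReal_mul (gammaPDFReal_nonneg ha hr x),
          ← ENNReal.ofReal_mul (by positivity), gammaPDFReal_mul_exp_neg_mul hr hrc]
    _ = ENNReal.ofReal ((r / (r + c)) ^ a) := by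
        rw [lintegral_const_mul _ (measurable_gammaPDF a _), lintegral_gammaPDF_eq_one ha hrc,
          mul_one]

lemma ae_nonneg_gammaMeasure (a r : ℝ) : ∀ᵐ x ∂gammaMeasure a r, 0 ≤ x :=
  (ae_withDensity_iff (measurable_gammaPDF a r)).2 <|
    ae_of_all _ fun _ hx => not_lt.1 fun hneg => hx (gammaPDF_of_neg hneg)

variable {Ω β : Type*} [MeasurableSpace Ω] [MeasurableSpace β] {μ : Measure Ω}
  [IsFiniteMeasure μ]

lemma IndepFun.measure_mem_eq_lintegral {X : Ω → β} {Y : Ω → ℝ} (hX : Measurable X)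
    (hY : Measurable Y) (hind : IndepFun X Y μ) {S : Set (β × ℝ)} (hS : MeasurableSet S) :
    μ {ω | (X ω, Y ω) ∈ S} = ∫⁻ x, μ.map Y (Prod.mk x ⁻¹' S) ∂μ.map X := by
  rw [← Measure.prod_apply hS, ← (indepFun_iff_map_prod_eq_prod_map_map hX.aemeasurable
    hY.aemeasurable).1 hind, Measure.map_apply (hX.prodMk hY) hS]
  rfl

lemma IndepFun.measure_le_of_map_eq_expMeasure {X : Ω → β} {Y : Ω → ℝ} (hX : Measurable X)
    (hY : Measurable Y) (hind : IndepFun X Y μ) {r : ℝ} (hr : 0 < r)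
    (hYexp : μ.map Y = expMeasure r)
    {f : β → ℝ} (hf : Measurable f) (hf_nonneg : ∀ᵐ x ∂μ.map X, 0 ≤ f x) :
    μ {ω | f (X ω) ≤ Y ω} = ∫⁻ x, ENNReal.ofReal (exp (-(r * f x))) ∂μ.map X := by
  refine (hind.measure_mem_eq_lintegral hX hY (S := {p | f p.1 ≤ p.2})
    (measurableSet_le (hf.comp measurable_fst) measurable_snd)).trans ?_
  refine lintegral_congr_ae (hf_nonneg.mono fun x hx => ?_)
  rw [hYexp]
  exact expMeasure_Ici hr hx

end ProbabilityTheory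

theorem sinr_exceedance_prob_gamma_interference
    {Ω : Type*} [MeasureSpace Ω] [IsProbabilityMeasure (ℙ : Measure Ω)]
    (L : ℕ) (hL : 0 < L)
    (Y Z : Ω → ℝ) (hYm : Measurable Y) (hZm : Measurable Z)
    (ly s : ℝ) (hly : 0 < ly) (hs : 0 < s)
    (hY : Measure.map Y ℙ = expMeasure ly⁻¹)
    (hZ : Measure.map Z ℙ = gammaMeasure L s⁻¹)
    (hind : IndepFun Y Z ℙ)
    (a ζ N0 : ℝ) (ha : 0 < a) (hζ : 0 < ζ) (hN0 : 0 < N0) :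
    ℙ {ω | a * Y ω / (Z ω + N0) ≥ ζ} =
      ENNReal.ofReal
        (Real.exp (-(ζ * N0 / (a * ly))) * (s ^ L)⁻¹ *
          ((1 / s + ζ / (a * ly)) ^ L)⁻¹) := by
  have hZ_nonneg : ∀ᵐ ω, 0 ≤ Z ω :=
    ae_of_ae_map hZm.aemeasurable (hZ ▸ ae_nonneg_gammaMeasure _ _)
  have hevent :
      {ω | a * Y ω / (Z ω + N0) ≥ ζ} =ᵐ[ℙ] {ω | ζ * (Z ω + N0) / a ≤ Y ω} := by
    filter_upwards [hZ_nonneg] with ω hω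
    change (ζ ≤ a * Y ω / (Z ω + N0)) = (ζ * (Z ω + N0) / a ≤ Y ω)
    rw [le_div_iff₀ (by positivity), div_le_iff₀ ha, mul_comm (Y ω)]
  have hexp (z : ℝ) : exp (-(ly⁻¹ * (ζ * (z + N0) / a))) =
      exp (-(ζ * N0 / (a * ly))) * exp (-(ζ / (a * ly) * z)) := by
    rw [← exp_add]; congr 1; field_simp; ring
  refine (measure_congr hevent).trans <| (hind.symm.measure_le_of_map_eq_expMeasure hZm hYm
    (inv_pos.2 hly) hY (f := fun z => ζ * (z + N0) / a) (by fun_prop)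
    (hZ ▸ (ae_nonneg_gammaMeasure _ _).mono fun z hz => by positivity)).trans ?_
  simp_rw [hexp, ENNReal.ofReal_mul (exp_pos _).le]
  rw [lintegral_const_mul _ (by fun_prop), hZ,
    lintegral_exp_neg_mul_gammaMeasure (by positivity) (by positivity) (by positivity),
    ← ENNReal.ofReal_mul (exp_pos _).le, rpow_natCast, one_div]
  ring_nf
end
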